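/- For ε ∈ [0,1/4] and the two-point seller distribution μ_{±ε} := ((1±ε)/2)·δ_0 + ((1∓ε)/2)·δ_{1/4} with B = 1: for every price p ∈ [0,1/4), the gap max_{q∈[0,1]} f^{±ε}(q) − f^{±ε}(p) ≥ 1/4, where f^{±ε}(p) := E_{S∼μ_{±ε}}[min{(p−S)₊,(1−p)₊}]. -/
import Mathlib


open MeasureTheory

noncomputable def fgft (p s b : ℝ) : ℝ := min (max (p - s) 0) (max (b - p) 0)

/-- seller distribution: 0 w.p. (1+ε)/2, 1/4 w.p. (1-ε)/2 -/
noncomputable def sellerEps (ε : ℝ) : Measure ℝ :=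
  ENNReal.ofReal ((1 + ε)/2) • Measure.dirac 0
    + ENNReal.ofReal ((1 - ε)/2) • Measure.dirac (1/4)

noncomputable def fEps (ε p : ℝ) : ℝ := ∫ s, fgft p s 1 ∂(sellerEps ε)

lemma fgft_integrable_dirac (p a : ℝ) :
    Integrable (fun s => fgft p s 1) (Measure.dirac a) := by
  have hc : Continuous fun s => fgft p s 1 := by
    unfold fgft; fun_prop
  refine ⟨hc.aestronglyMeasurable, HasFiniteIntegral.of_bounded
    (C := max (1 - p) 0) (ae_of_all _ fun s => ?_)⟩
  rw [Real.norm_eq_abs, abs_of_nonneg (le_min (le_max_right _ _) (le_max_right _ _))]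
  exact min_le_right _ _

lemma fEps_eq (ε p : ℝ) (h1 : 0 ≤ (1+ε)/2) (h2 : 0 ≤ (1-ε)/2) :
    fEps ε p = ((1+ε)/2) * fgft p 0 1 + ((1-ε)/2) * fgft p (1/4) 1 := by
  unfold fEps sellerEps
  rw [integral_add_measure, integral_smul_measure, integral_smul_measure,
    integral_dirac, integral_dirac, ENNReal.toReal_ofReal h1, ENNReal.toReal_ofReal h2]
  · simp [smul_eq_mul]
  · exact (fgft_integrable_dirac p 0).smul_measure (by simp)
  · exact (fgft_integrable_dirac p (1/4)).smul_measure (by simp)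

lemma fgft_le_one (q s : ℝ) (hq : 0 ≤ q) : fgft q s 1 ≤ 1 := by
  unfold fgft
  refine le_trans (min_le_right _ _) ?_
  rw [max_le_iff]; constructor <;> linarith

lemma fgft_nonneg (q s b : ℝ) : 0 ≤ fgft q s b :=
  le_min (le_max_right _ _) (le_max_right _ _)

lemma fEps_bddAbove (ε : ℝ) (h1 : 0 ≤ (1+ε)/2) (h2 : 0 ≤ (1-ε)/2) :
    BddAbove ((fEps ε) '' Set.Icc (0:ℝ) 1) := by
  refine ⟨1, fun x hx => ?_⟩
  obtain ⟨q, hq, rfl⟩ := hx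
  rw [fEps_eq ε q h1 h2]
  have b1 := fgft_le_one q 0 hq.1
  have b2 := fgft_le_one q (1/4) hq.1
  nlinarith [fgft_nonneg q 0 1, fgft_nonneg q (1/4) 1]

theorem fEps_sub_region (ε : ℝ) (hε : ε ∈ Set.Icc (0:ℝ) (1/4))
    (p : ℝ) (hp : p ∈ Set.Ico (0:ℝ) (1/4)) :
    sSup ((fEps ε) '' Set.Icc (0:ℝ) 1) - fEps ε p ≥ 1/4 ∧
      sSup ((fEps (-ε)) '' Set.Icc (0:ℝ) 1) - fEps (-ε) p ≥ 1/4 := by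
  obtain ⟨hε0, hε1⟩ := hε
  obtain ⟨hp0, hp1⟩ := hp
  have h1 : 0 ≤ (1+ε)/2 := by linarith
  have h2 : 0 ≤ (1-ε)/2 := by linarith
  have h1' : 0 ≤ (1+(-ε))/2 := by linarith
  have h2' : 0 ≤ (1-(-ε))/2 := by linarith
  have hfp0 : fgft p 0 1 = p := by
    unfold fgft
    rw [sub_zero, max_eq_left hp0, max_eq_left (by linarith), min_eq_left (by linarith)]
  have hfp4 : fgft p (1/4) 1 = 0 := by
    unfold fgft
    rw [max_eq_right (by linarith : p - 1/4 ≤ 0), min_eq_left (le_max_right _ _)]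
  have hepp : fEps ε p = (1+ε)/2 * p := by
    rw [fEps_eq _ _ h1 h2, hfp0, hfp4]; ring
  have henp : fEps (-ε) p = (1-ε)/2 * p := by
    rw [fEps_eq _ _ h1' h2', hfp0, hfp4]; ring_nf
  have he1 : fEps ε (1/2) = (3+ε)/8 := by
    rw [fEps_eq _ _ h1 h2]
    norm_num [fgft]
    ring
  have he2 : fEps (-ε) (5/8) = 3/8 := by
    rw [fEps_eq _ _ h1' h2']
    norm_num [fgft]
    ring
  have hs1 : fEps ε (1/2) ≤ sSup ((fEps ε) '' Set.Icc (0:ℝ) 1) :=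
    le_csSup (fEps_bddAbove ε h1 h2) ⟨1/2, by norm_num, rfl⟩
  have hs2 : fEps (-ε) (5/8) ≤ sSup ((fEps (-ε)) '' Set.Icc (0:ℝ) 1) :=
    le_csSup (fEps_bddAbove (-ε) h1' h2') ⟨5/8, by norm_num, rfl⟩
  constructor
  · rw [he1] at hs1; rw [hepp]; nlinarith
  · rw [he2] at hs2; rw [henp]; nlinarith
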